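/- Let k ≥ 1 and λ a positive integer. Define the Boole polynomials of order k, Bl_n^{(k)}(x|λ), by ∑_{n≥0} 2^k Bl_n^{(k)}(x|λ) t^n/n! = (2/(1+(1+t)^λ))^k (1+t)^x. Then for every m ≥ 0, ∑_{n=0}^{m} Bl_n^{(k)}(x|λ) S₂(m,n) = (λ^m / 2^k) E_m^{(k)}(x/λ), where E_m^{(k)} are the Euler polynomials of order k. -/

import Mathlib

/-!
Substituting `t ↦ e^t - 1` is a ring endomorphism of `ℚ⟦t⟧`. Because
`(e^t - 1)^n / n! = ∑ₘ S₂(m, n) t^m / m!`, it sends the exponential generating function of a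
sequence `a` to that of its Stirling transform `m ↦ ∑ₙ S₂(m, n) aₙ`, and it sends `(1 + t)^x`
to `e^{xt}` because `x^m = ∑ₙ S₂(m, n) (x)ₙ`. Applied to the defining relation of the Boole
polynomials this yields
`(∑ₘ 2^k (∑ₙ Bl_n S₂(m, n)) t^m / m!) (1 + e^{λt})^k = 2^k e^{xt}`,
which is the defining relation of `E_m^{(k)}(x/λ)` after rescaling `t ↦ λt`; so the coefficients
agree, since `(1 + e^{λt})^k` is not a zero divisor.
-/

open Finset PowerSeries

/-- Stirling numbers of the second kind. -/
def stirling2 : ℕ → ℕ → ℕ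
  | 0, 0 => 1
  | 0, _ + 1 => 0
  | _ + 1, 0 => 0
  | n + 1, k + 1 => (k + 1) * stirling2 n (k + 1) + stirling2 n k

/-- Unsigned Stirling numbers of the first kind. -/
def stirling1 : ℕ → ℕ → ℕ
  | 0, 0 => 1
  | 0, _ + 1 => 0
  | _ + 1, 0 => 0
  | n + 1, k + 1 => n * stirling1 n (k + 1) + stirling1 n k

/-- Signed Stirling numbers of the first kind. -/
def s1 (n l : ℕ) : ℚ := (-1) ^ (n - l) * (stirling1 n l : ℚ)

/-- The exponential generating function `∑ a n * t^n / n!` as a power series over `ℚ`. -/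
noncomputable def egf (a : ℕ → ℚ) : PowerSeries ℚ :=
  PowerSeries.mk fun n => a n / (Nat.factorial n : ℚ)

/-- The binomial series `(1+t)^x = ∑ (x)_n t^n / n!` for `x : ℚ`. -/
noncomputable def onePlusTPow (x : ℚ) : PowerSeries ℚ :=
  egf fun n => ∏ i ∈ Finset.range n, (x - i)

/-- `e^{xt}` as a power series over `ℚ`. -/
noncomputable def expXT (x : ℚ) : PowerSeries ℚ := egf fun n => x ^ n

theorem stirling2_eq_stirlingSecond : ∀ m n, stirling2 m n = Nat.stirlingSecond m n
  | 0, 0 | 0, _ + 1 | _ + 1, 0 => rfl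
  | m + 1, n + 1 => by
    rw [stirling2, Nat.stirlingSecond_succ_succ, stirling2_eq_stirlingSecond m (n + 1),
      stirling2_eq_stirlingSecond m n]

namespace PowerSeries

theorem coeff_subst_eq_sum_range {R : Type*} [CommRing R] {g : R⟦X⟧} (hg : constantCoeff g = 0)
    (f : R⟦X⟧) (m : ℕ) :
    coeff m (f.subst g) = ∑ n ∈ range (m + 1), coeff n f * coeff m (g ^ n) := by
  rw [coeff_subst' (HasSubst.of_constantCoeff_zero' hg)]
  refine finsum_eq_sum_of_support_subset _ fun n hn => ?_
  by_contra hnm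
  have hX : X ^ n ∣ g ^ n := pow_dvd_pow_of_dvd (X_dvd_iff.mpr hg) n
  rw [Function.mem_support, X_pow_dvd_iff.mp hX m (by simpa using hnm), smul_zero] at hn
  exact hn rfl

theorem derivative_exp_sub_one_pow (A : Type*) [CommRing A] [Algebra ℚ A] (n : ℕ) :
    d⁄dX A ((exp A - 1) ^ (n + 1)) =
      C ((n : A) + 1) * ((exp A - 1) ^ (n + 1) + (exp A - 1) ^ n) := by
  rw [derivative_pow, map_sub, derivative_exp, derivative_one, sub_zero]
  rw [map_add, map_natCast, map_one, Nat.add_sub_cancel, Nat.cast_add_one]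
  ring

theorem factorial_mul_coeff_exp_sub_one_pow (A : Type*) [CommRing A] [Algebra ℚ A] (m n : ℕ) :
    (m.factorial : A) * coeff m ((exp A - 1) ^ n) = n.factorial * Nat.stirlingSecond m n := by
  induction m generalizing n with
  | zero => cases n <;> simp
  | succ m ih =>
    cases n with
    | zero => simp [coeff_one]
    | succ j =>
      have hcoeff := congrArg (coeff m) (derivative_exp_sub_one_pow A j)
      rw [coeff_derivative, coeff_C_mul, map_add] at hcoeff
      have ih_succ := ih (j + 1)
      rw [Nat.stirlingSecond_succ_succ, Nat.factorial_succ, Nat.factorial_succ]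
      rw [Nat.factorial_succ] at ih_succ
      push_cast at ih_succ ⊢
      linear_combination (m.factorial : A) * hcoeff + ((j : A) + 1) * (ih_succ + ih j)

end PowerSeries

namespace Polynomial

theorem X_pow_eq_sum_stirlingSecond_mul_descPochhammer (R : Type*) [CommRing R] (m : ℕ) :
    (X : R[X]) ^ m = ∑ n ∈ range (m + 1), (m.stirlingSecond n : R[X]) * descPochhammer R n := by
  induction m with
  | zero => simp
  | succ m ih =>
    have X_mul (n : ℕ) :
        X * descPochhammer R n = descPochhammer R (n + 1) + (n : R[X]) * descPochhammer R n := by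
      rw [descPochhammer_succ_right]
      ring
    have shift :
        ∑ n ∈ range (m + 1), ((n + 1 : ℕ) * m.stirlingSecond (n + 1) : R[X]) * descPochhammer R (n + 1)
          = ∑ n ∈ range (m + 1), (n * m.stirlingSecond n : R[X]) * descPochhammer R n := by
      have extend := sum_range_succ (fun n => (n * m.stirlingSecond n : R[X]) * descPochhammer R n)
        (m + 1)
      rw [Nat.stirlingSecond_eq_zero_of_lt (Nat.lt_succ_self m), Nat.cast_zero, mul_zero, zero_mul,
        add_zero, sum_range_succ'] at extend
      simpa using extend
    calc (X : R[X]) ^ (m + 1)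
        = ∑ n ∈ range (m + 1), (m.stirlingSecond n : R[X]) * (X * descPochhammer R n) := by
          rw [pow_succ', ih, mul_sum]
          exact sum_congr rfl fun n _ => by ring
      _ = ∑ n ∈ range (m + 1),
              ((n + 1 : ℕ) * m.stirlingSecond (n + 1) : R[X]) * descPochhammer R (n + 1)
            + ∑ n ∈ range (m + 1), (m.stirlingSecond n : R[X]) * descPochhammer R (n + 1) := by
          rw [shift, ← sum_add_distrib]
          exact sum_congr rfl fun n _ => by rw [X_mul]; ring
      _ = ∑ n ∈ range (m + 2), ((m + 1).stirlingSecond n : R[X]) * descPochhammer R n := by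
          rw [sum_range_succ' _ (m + 1), ← sum_add_distrib]
          simp [Nat.stirlingSecond_succ_succ, add_mul]

end Polynomial

theorem coeff_egf (a : ℕ → ℚ) (n : ℕ) : coeff n (egf a) = a n / n.factorial :=
  coeff_mk _ _

theorem egf_injective : Function.Injective egf := fun a b h => funext fun n => by
  have hn := congrArg (coeff n) h
  rwa [coeff_egf, coeff_egf, div_left_inj' (by positivity)] at hn

theorem rescale_egf (c : ℚ) (a : ℕ → ℚ) : rescale c (egf a) = egf fun n => c ^ n * a n := by
  simp only [egf, rescale_mk, mul_div_assoc]

theorem rescale_expXT (c y : ℚ) : rescale c (expXT y) = expXT (c * y) := by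
  simp only [expXT, rescale_egf, mul_pow]

theorem subst_exp_sub_one_egf (a : ℕ → ℚ) :
    (egf a).subst (exp ℚ - 1) = egf fun m => ∑ n ∈ range (m + 1), a n * m.stirlingSecond n := by
  ext m
  rw [coeff_subst_eq_sum_range (by simp), coeff_egf, sum_div]
  refine sum_congr rfl fun n _ => ?_
  rw [coeff_egf, eq_div_of_mul_eq (by positivity)
    ((mul_comm _ _).trans (factorial_mul_coeff_exp_sub_one_pow ℚ m n))]
  field_simp

theorem subst_exp_sub_one_onePlusTPow (x : ℚ) : (onePlusTPow x).subst (exp ℚ - 1) = expXT x := by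
  rw [onePlusTPow, subst_exp_sub_one_egf, expXT]
  congr 1
  funext m
  have h := congrArg (Polynomial.eval x)
    (Polynomial.X_pow_eq_sum_stirlingSecond_mul_descPochhammer ℚ m)
  simp only [Polynomial.eval_pow, Polynomial.eval_X, Polynomial.eval_finsetSum,
    Polynomial.eval_mul, Polynomial.eval_natCast, descPochhammer_eval_eq_prod_range] at h
  rw [h]
  exact sum_congr rfl fun n _ => mul_comm _ _

theorem boole_order_k_stirling2_eq_euler_order_k_general (k L : ℕ) (hL : 0 < L) (x : ℚ)
    (Blk : ℕ → ℚ) (Ek : ℕ → ℚ → ℚ)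
    (hBlk : egf (fun n => 2 ^ k * Blk n) * (1 + (1 + PowerSeries.X) ^ L) ^ k =
      2 ^ k * onePlusTPow x)
    (hEk : ∀ y : ℚ, egf (fun m => Ek m y) * (PowerSeries.exp ℚ + 1) ^ k = 2 ^ k * expXT y)
    (m : ℕ) :
    ∑ n ∈ Finset.range (m + 1), Blk n * (stirling2 m n : ℚ) =
      ((L : ℚ) ^ m / 2 ^ k) * Ek m (x / L) := by
  have hLne : (L : ℚ) ≠ 0 := by positivity
  have hs : HasSubst (exp ℚ - 1) := HasSubst.of_constantCoeff_zero' (by simp)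
  have hBlk_subst := congrArg (substAlgHom hs) hBlk
  simp only [map_mul, map_pow, map_add, map_one, map_ofNat, substAlgHom_X, coe_substAlgHom,
    subst_exp_sub_one_egf, subst_exp_sub_one_onePlusTPow, add_sub_cancel] at hBlk_subst
  have hEk_rescaled := congrArg (rescale (L : ℚ)) (hEk (x / L))
  simp only [map_mul, map_pow, map_add, map_one, map_ofNat, rescale_egf, rescale_expXT,
    mul_div_cancel₀ _ hLne, ← exp_pow_eq_rescale_exp, add_comm _ (1 : ℚ⟦X⟧)] at hEk_rescaled
  have hden : (1 + exp ℚ ^ L) ^ k ≠ 0 :=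
    pow_ne_zero _ fun h => by simpa using congrArg constantCoeff h
  have hcoeff := congrFun (egf_injective (mul_right_cancel₀ hden (hBlk_subst.trans hEk_rescaled.symm))) m
  simp only [mul_assoc, ← mul_sum] at hcoeff
  simp only [stirling2_eq_stirlingSecond]
  rw [div_mul_eq_mul_div, eq_div_iff (by positivity), ← hcoeff, mul_comm]

theorem boole_order_k_stirling2_eq_euler_order_k (k L : ℕ) (hk : 1 ≤ k) (hL : 0 < L) (x : ℚ)
    (Blk : ℕ → ℚ) (Ek : ℕ → ℚ → ℚ)
    (hBlk : egf (fun n => 2 ^ k * Blk n) * (1 + (1 + PowerSeries.X) ^ L) ^ k =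
      2 ^ k * onePlusTPow x)
    (hEk : ∀ y : ℚ, egf (fun m => Ek m y) * (PowerSeries.exp ℚ + 1) ^ k = 2 ^ k * expXT y)
    (m : ℕ) :
    ∑ n ∈ Finset.range (m + 1), Blk n * (stirling2 m n : ℚ) =
      ((L : ℚ) ^ m / 2 ^ k) * Ek m (x / L) :=
  boole_order_k_stirling2_eq_euler_order_k_general k L hL x Blk Ek hBlk hEk m
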